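/- Let Σ₀ and Σ₁ be positive definite real symmetric d×d matrices. Then the curve Σ(t) = Σ₁^{1/2} (Σ₁^{-1/2} Σ₀ Σ₁^{-1/2})^{1-t} Σ₁^{1/2} satisfies the geodesic equation d²Σ/dt² = (dΣ/dt) Σ⁻¹ (dΣ/dt) for all t ∈ (0,1). -/

import Mathlib

/-!
With `S⁻¹ Σ₀ S⁻¹ = U D Uᵀ` the curve is `Σ(t) = (S U) diag(D^{1-t}) (Uᵀ S)`. The geodesic equation
`Σ'' = Σ' Σ⁻¹ Σ'` is invariant under `Σ ↦ A Σ B` for invertible constant `A`, `B`, so it suffices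
to check it for the diagonal curve `diag(D^{1-t})`, where it is the scalar identity
`f'' = (log x)² f = f'² / f` for `f(t) = x^{1-t}`.
-/

open Matrix

attribute [local instance] Matrix.normedAddCommGroup Matrix.normedSpace

/-- Spectral real power of a positive definite matrix `U diag D Uᵀ`. -/
noncomputable def spectralPow {d : ℕ} (U : Matrix (Fin d) (Fin d) ℝ) (D : Fin d → ℝ)
    (s : ℝ) : Matrix (Fin d) (Fin d) ℝ :=
  U * Matrix.diagonal (fun i => D i ^ s) * Uᵀ

open Real

lemma hasDerivAt_mul_rpow_one_sub (c : ℝ) {x : ℝ} (hx : 0 < x) (t : ℝ) :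
    HasDerivAt (fun t : ℝ => c * x ^ (1 - t)) (-(c * log x) * x ^ (1 - t)) t :=
  (((hasStrictDerivAt_const_rpow hx (1 - t)).hasDerivAt.comp t
    ((hasDerivAt_id t).const_sub 1)).const_mul c).congr_deriv (by ring)

section

variable {n : Type*} [Fintype n] [DecidableEq n]

namespace Matrix

lemma hasDerivAt_diagonal {g : ℝ → n → ℝ} {g' : n → ℝ} {t : ℝ}
    (h : ∀ i, HasDerivAt (fun t => g t i) (g' i) t) :
    HasDerivAt (fun t => diagonal (g t)) (diagonal g') t :=
  (diagonalLinearMap n ℝ ℝ).toContinuousLinearMap.hasFDerivAt.comp_hasDerivAt t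
    (hasDerivAt_pi.2 h)

lemma inv_diagonal_of_ne_zero {v : n → ℝ} (hv : ∀ i, v i ≠ 0) :
    (diagonal v)⁻¹ = diagonal v⁻¹ :=
  inv_eq_left_inv <| by
    rw [diagonal_mul_diagonal, ← diagonal_one]
    exact congrArg diagonal (funext fun i => inv_mul_cancel₀ (hv i))

noncomputable def mulLeftRightCLE {A B : Matrix n n ℝ} (hA : IsUnit A) (hB : IsUnit B) :
    Matrix n n ℝ ≃L[ℝ] Matrix n n ℝ :=
  have hA' := (isUnit_iff_isUnit_det A).1 hA
  have hB' := (isUnit_iff_isUnit_det B).1 hB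
  LinearEquiv.toContinuousLinearEquiv <|
    LinearEquiv.ofLinearMap (LinearMap.mulRight ℝ B ∘ₗ LinearMap.mulLeft ℝ A)
      (LinearMap.mulRight ℝ B⁻¹ ∘ₗ LinearMap.mulLeft ℝ A⁻¹)
      (by
        ext X : 1
        simp [Matrix.mul_assoc, mul_nonsing_inv_cancel_left _ _ hA', nonsing_inv_mul _ hB'])
      (by
        ext X : 1
        simp [Matrix.mul_assoc, nonsing_inv_mul_cancel_left _ _ hA', mul_nonsing_inv _ hB'])

/-- `X ↦ A X B` is a linear automorphism, so both sides are `0` where `Γ` is not differentiable. -/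
lemma deriv_mul_mul {A B : Matrix n n ℝ} (hA : IsUnit A) (hB : IsUnit B)
    (Γ : ℝ → Matrix n n ℝ) : deriv (fun t => A * Γ t * B) = fun t => A * deriv Γ t * B :=
  funext fun t => congrArg (· 1) ((mulLeftRightCLE hA hB).comp_fderiv (f := Γ) (x := t))

end Matrix

def GeodesicEqAt (Γ : ℝ → Matrix n n ℝ) (t : ℝ) : Prop :=
  deriv (deriv Γ) t = deriv Γ t * (Γ t)⁻¹ * deriv Γ t

lemma GeodesicEqAt.mul_mul {A B : Matrix n n ℝ} (hA : IsUnit A) (hB : IsUnit B)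
    {Γ : ℝ → Matrix n n ℝ} {t : ℝ} (h : GeodesicEqAt Γ t) :
    GeodesicEqAt (fun t => A * Γ t * B) t := by
  have hA' := (isUnit_iff_isUnit_det A).1 hA
  have hB' := (isUnit_iff_isUnit_det B).1 hB
  unfold GeodesicEqAt at *
  rw [deriv_mul_mul hA hB, deriv_mul_mul hA hB]
  beta_reduce
  rw [h]
  simp only [Matrix.mul_inv_rev, Matrix.mul_assoc, mul_nonsing_inv_cancel_left _ _ hB',
    nonsing_inv_mul_cancel_left _ _ hA']

lemma deriv_diagonal_mul_rpow_one_sub (c : n → ℝ) {D : n → ℝ} (hD : ∀ i, 0 < D i) :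
    deriv (fun t : ℝ => diagonal fun i => c i * D i ^ (1 - t)) =
      fun t : ℝ => diagonal fun i => -(c i * log (D i)) * D i ^ (1 - t) :=
  funext fun t => (hasDerivAt_diagonal fun i => hasDerivAt_mul_rpow_one_sub (c i) (hD i) t).deriv

lemma geodesicEqAt_diagonal_rpow_one_sub {D : n → ℝ} (hD : ∀ i, 0 < D i) (t : ℝ) :
    GeodesicEqAt (fun t => diagonal fun i => D i ^ (1 - t)) t := by
  have hpos i : 0 < D i ^ (1 - t) := rpow_pos_of_pos (hD i) _
  have h1 := deriv_diagonal_mul_rpow_one_sub (fun _ => 1) hD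
  have h2 := deriv_diagonal_mul_rpow_one_sub (fun i => -(1 * log (D i))) hD
  simp only [one_mul] at h1 h2
  unfold GeodesicEqAt
  rw [h1, h2, inv_diagonal_of_ne_zero fun i => (hpos i).ne', diagonal_mul_diagonal,
    diagonal_mul_diagonal]
  refine congrArg diagonal (funext fun i => ?_)
  rw [Pi.inv_apply]
  field_simp [(hpos i).ne']

end

theorem stmt1_general {d : ℕ} (S : Matrix (Fin d) (Fin d) ℝ)
    (hS : S.PosDef)
    (U : Matrix (Fin d) (Fin d) ℝ) (D : Fin d → ℝ)
    (hU : U * Uᵀ = 1) (hD : ∀ i, 0 < D i)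
    (Sig : ℝ → Matrix (Fin d) (Fin d) ℝ)
    (hSig : ∀ t, Sig t = S * spectralPow U D (1 - t) * S) :
    ∀ t ∈ Set.Ioo (0:ℝ) 1,
      deriv (deriv Sig) t = deriv Sig t * (Sig t)⁻¹ * deriv Sig t := by
  intro t _
  have hSig' : Sig = fun t => S * U * diagonal (fun i => D i ^ (1 - t)) * (Uᵀ * S) := by
    funext t
    simp only [hSig, spectralPow, Matrix.mul_assoc]
  have hU' : IsUnit U := ⟨⟨U, Uᵀ, hU, mul_eq_one_comm.mp hU⟩, rfl⟩
  have hUt : IsUnit Uᵀ := ⟨⟨Uᵀ, U, mul_eq_one_comm.mp hU, hU⟩, rfl⟩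
  rw [hSig']
  exact (geodesicEqAt_diagonal_rpow_one_sub hD t).mul_mul (hS.isUnit.mul hU') (hUt.mul hS.isUnit)

/-- with `S = Σ₁^{1/2}` and `S⁻¹ Σ₀ S⁻¹ = U diag D Uᵀ`, the curve
`Σ(t) = Σ₁^{1/2} (Σ₁^{-1/2} Σ₀ Σ₁^{-1/2})^{1-t} Σ₁^{1/2}` satisfies the geodesic
equation `d²Σ/dt² = (dΣ/dt) Σ⁻¹ (dΣ/dt)` for all `t ∈ (0,1)`. -/
theorem stmt1 {d : ℕ} (S0 S1 S : Matrix (Fin d) (Fin d) ℝ)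
    (hS0 : S0.PosDef) (hS1 : S1.PosDef)
    (hS : S.PosDef) (hSsq : S * S = S1)
    (U : Matrix (Fin d) (Fin d) ℝ) (D : Fin d → ℝ)
    (hU : U * Uᵀ = 1) (hD : ∀ i, 0 < D i)
    (hdecomp : S⁻¹ * S0 * S⁻¹ = U * Matrix.diagonal D * Uᵀ)
    (Sig : ℝ → Matrix (Fin d) (Fin d) ℝ)
    (hSig : ∀ t, Sig t = S * spectralPow U D (1 - t) * S) :
    ∀ t ∈ Set.Ioo (0:ℝ) 1,
      deriv (deriv Sig) t = deriv Sig t * (Sig t)⁻¹ * deriv Sig t :=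
  stmt1_general S hS U D hU hD Sig hSig
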